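/- Let Q be an α-covering of ℝ^n (0 ≤ α ≤ 1) and R > 0. Then there exists a constant n_0' such that for every Q ∈ Q, the number of Q' ∈ Q with (Q + B(0,R)) ∩ Q' ≠ ∅ is at most n_0'. -/

import Mathlib

open MeasureTheory Metric Complex Function Pointwise
noncomputable section
abbrev Eu (n : ℕ) := EuclideanSpace ℝ (Fin n)
noncomputable def jb {n : ℕ} (ξ : Eu n) : ℝ := Real.sqrt (1 + ‖ξ‖^2)
noncomputable def FT {n : ℕ} (f : Eu n → ℂ) (ξ : Eu n) : ℂ :=
  ∫ x, Complex.exp (-(Complex.I * ((inner ℝ ξ x : ℝ) : ℂ))) * f x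
noncomputable def invFT {n : ℕ} (f : Eu n → ℂ) (x : Eu n) : ℂ :=
  ((2 * Real.pi) ^ n : ℝ)⁻¹ * ∫ ξ, Complex.exp (Complex.I * ((inner ℝ x ξ : ℝ) : ℂ)) * f ξ
noncomputable def pdo {n : ℕ} (σ : Eu n → Eu n → ℂ) (f : Eu n → ℂ) (x : Eu n) : ℂ :=
  ((2 * Real.pi) ^ n : ℝ)⁻¹ * ∫ ξ, Complex.exp (Complex.I * ((inner ℝ x ξ : ℝ) : ℂ)) * σ x ξ * FT f ξ
def IsAlphaCovering {n : ℕ} (α : ℝ) {ι : Type} (Q : ι → Set (Eu n)) : Prop :=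
  (∀ ξ, ∃ i, ξ ∈ Q i) ∧
  (∃ n₀ : ℕ, ∀ i, {j | (Q i ∩ Q j).Nonempty}.Finite ∧ Nat.card {j | (Q i ∩ Q j).Nonempty} ≤ n₀) ∧
  (∃ C : ℝ, 0 < C ∧ ∀ i, ∀ ξ ∈ Q i,
     ENNReal.ofReal (C⁻¹ * jb ξ ^ (α * n)) ≤ volume (Q i) ∧
     volume (Q i) ≤ ENNReal.ofReal (C * jb ξ ^ (α * n))) ∧
  (∃ K : ℝ, 1 ≤ K ∧ ∀ i, ∃ c r c' R, 0 < r ∧ ball c r ⊆ Q i ∧ Q i ⊆ ball c' R ∧ R ≤ K * r)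


/-!
Write `ball (c j) (r j) ⊆ Q j ⊆ ball (c' j) (K * r j)`; then `|Q j|` is comparable to `r j ^ n`.
The lower bound `|Q j| ≥ κ` bounds every `r j` below by some `ρ > 0`, and if `Q j` meets
`Q i + B(0, R)` then `|Q j| ≍ |Q i|`, so `r j ≍ r i`. Hence all such `Q j` lie in a ball of radius
`≲ r i + R ≲ r i` around `c' i`, while their inner balls have volume `≳ r i ^ n` and cover each
point at most `n₀` times; comparing volumes bounds their number.
-/

open Module Finset ENNReal

lemma one_le_jb {n : ℕ} (x : Eu n) : 1 ≤ jb x :=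
  Real.one_le_sqrt.2 (le_add_of_nonneg_right (sq_nonneg _))

lemma jb_le_one_add_mul_jb {n : ℕ} {x y : Eu n} {R : ℝ} (h : dist x y ≤ R) :
    jb x ≤ (1 + R) * jb y := by
  have hR : 0 ≤ R := dist_nonneg.trans h
  have hxy : ‖x‖ ≤ ‖y‖ + R :=
    (norm_le_norm_add_norm_sub' x y).trans (by rw [← dist_eq_norm]; linarith)
  rw [jb, jb, ← Real.sqrt_sq (by positivity : 0 ≤ 1 + R), ← Real.sqrt_mul (by positivity)]
  refine Real.sqrt_le_sqrt ?_
  nlinarith [pow_le_pow_left₀ (norm_nonneg x) hxy 2, norm_nonneg y, sq_nonneg (‖y‖ - 1),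
    mul_nonneg hR (sq_nonneg ‖y‖), mul_nonneg (mul_nonneg hR hR) (sq_nonneg ‖y‖)]

theorem sum_measure_le_mul_of_multiplicity_le {X ι : Type*} [MeasurableSpace X] (μ : Measure X)
    {T : Finset ι} {A : ι → Set X} {U : Set X} {N : ℕ} (hA : ∀ j ∈ T, MeasurableSet (A j))
    (hU : MeasurableSet U) (hAU : ∀ j ∈ T, A j ⊆ U)
    (hN : ∀ x, ∀ s ⊆ T, (∀ j ∈ s, x ∈ A j) → #s ≤ N) :
    ∑ j ∈ T, μ (A j) ≤ N * μ U := by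
  classical
  have hpt x : ∑ j ∈ T, (A j).indicator 1 x ≤ U.indicator (fun _ ↦ (N : ℝ≥0∞)) x := by
    by_cases hx : x ∈ U
    · simp only [Set.indicator_apply, Pi.one_apply, ← natCast_card_filter, hx, if_true]
      exact_mod_cast hN x _ (filter_subset _ T) fun j hj ↦ (mem_filter.1 hj).2
    · rw [Set.indicator_of_notMem hx]
      exact (sum_eq_zero fun j hj ↦ Set.indicator_of_notMem (fun h ↦ hx (hAU j hj h)) _).le
  calc ∑ j ∈ T, μ (A j) = ∫⁻ x, ∑ j ∈ T, (A j).indicator 1 x ∂μ := by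
        rw [lintegral_finsetSum' _ fun j hj ↦ (measurable_one.indicator (hA j hj)).aemeasurable]
        exact sum_congr rfl fun j hj ↦ (lintegral_indicator_one (hA j hj)).symm
    _ ≤ ∫⁻ x, U.indicator (fun _ ↦ (N : ℝ≥0∞)) x ∂μ := lintegral_mono hpt
    _ = N * μ U := by rw [lintegral_indicator_const hU]

theorem Set.finite_and_natCard_le_of_forall_finset_card_le {α : Type*} {s : Set α} {N : ℕ}
    (h : ∀ T : Finset α, ↑T ⊆ s → #T ≤ N) : s.Finite ∧ Nat.card s ≤ N := by
  have hs : s.Finite := by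
    by_contra hs
    obtain ⟨T, hT, hcard⟩ := Set.Infinite.exists_subset_card_eq hs (N + 1)
    have := h T hT
    omega
  refine ⟨hs, ?_⟩
  rw [Nat.card_coe_set_eq, Set.ncard_eq_toFinset_card s hs]
  exact h _ hs.coe_toFinset.subset

section Neighbors

variable {X ι : Type*} [PseudoMetricSpace X]

def thickeningNeighbors (Q : ι → Set X) (R : ℝ) (i : ι) : Set ι :=
  {j | (thickening R (Q i) ∩ Q j).Nonempty}

variable {Q : ι → Set X} {R : ℝ} {i j : ι}

lemma mem_thickeningNeighbors_iff :
    j ∈ thickeningNeighbors Q R i ↔ ∃ x ∈ Q j, ∃ y ∈ Q i, dist x y < R := by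
  simp only [thickeningNeighbors, Set.mem_ofPred_eq, Set.Nonempty, Set.mem_inter_iff,
    mem_thickening_iff]
  tauto

lemma mem_thickeningNeighbors_comm :
    j ∈ thickeningNeighbors Q R i ↔ i ∈ thickeningNeighbors Q R j := by
  simp only [mem_thickeningNeighbors_iff]
  exact ⟨fun ⟨x, hx, y, hy, h⟩ ↦ ⟨y, hy, x, hx, dist_comm x y ▸ h⟩,
    fun ⟨x, hx, y, hy, h⟩ ↦ ⟨y, hy, x, hx, dist_comm x y ▸ h⟩⟩

lemma subset_ball_of_mem_thickeningNeighbors {a a' : X} {s s' : ℝ} (hi : Q i ⊆ ball a s)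
    (hj : Q j ⊆ ball a' s') (hij : j ∈ thickeningNeighbors Q R i) :
    Q j ⊆ ball a (s + R + 2 * s') := by
  obtain ⟨x, hx, y, hy, hxy⟩ := mem_thickeningNeighbors_iff.1 hij
  intro z hz
  have hz' := mem_ball.1 (hj hz)
  have hx' := mem_ball'.1 (hj hx)
  have hy' := mem_ball.1 (hi hy)
  rw [mem_ball]
  calc dist z a ≤ dist z a' + dist a' x + dist x a := dist_triangle4 _ _ _ _
    _ ≤ dist z a' + dist a' x + (dist x y + dist y a) := by gcongr; exact dist_triangle _ _ _
    _ < s + R + 2 * s' := by linarith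

lemma thickeningNeighbors_subset_of_subsingleton [Subsingleton X] (hi : (Q i).Nonempty) :
    thickeningNeighbors Q R i ⊆ {j | (Q i ∩ Q j).Nonempty} := by
  rintro j ⟨x, -, hx⟩
  obtain ⟨y, hy⟩ := hi
  exact ⟨x, Subsingleton.elim y x ▸ hy, hx⟩

end Neighbors

section HaarBalls

variable {E : Type*} [NormedAddCommGroup E] [NormedSpace ℝ E] [FiniteDimensional ℝ E]
  [MeasurableSpace E] [BorelSpace E] (μ : Measure E) [μ.IsAddHaarMeasure]

theorem exists_pos_le_of_le_measure_ball (hE : finrank ℝ E ≠ 0) {κ : ℝ} (hκ : 0 < κ) :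
    ∃ ρ > 0, ∀ (x : E) (a : ℝ), ENNReal.ofReal κ ≤ μ (ball x a) → ρ ≤ a := by
  set ω := (μ (ball (0 : E) 1)).toReal
  have hω : 0 < ω := ENNReal.toReal_pos (measure_ball_pos μ _ one_pos).ne' measure_ball_lt_top.ne
  refine ⟨min 1 (κ / ω), by positivity, fun x a h ↦ ?_⟩
  have ha : 0 < a := by
    by_contra! ha
    rw [ball_eq_empty.2 ha, measure_empty, nonpos_iff_eq_zero, ENNReal.ofReal_eq_zero] at h
    linarith
  rw [Measure.addHaar_ball_of_pos μ x ha, ← ENNReal.ofReal_toReal measure_ball_lt_top.ne,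
    ← ENNReal.ofReal_mul (by positivity), ENNReal.ofReal_le_ofReal_iff (by positivity),
    ← div_le_iff₀ hω] at h
  rcases le_or_gt 1 a with ha1 | ha1
  · exact (min_le_left _ _).trans ha1
  · exact (min_le_right _ _).trans (h.trans (pow_le_of_le_one ha.le ha1.le hE))

theorem le_mul_of_measure_ball_le (hE : finrank ℝ E ≠ 0) {x y : E} {a b M : ℝ} (hM : 1 ≤ M)
    (hb : 0 < b) (h : μ (ball x a) ≤ ENNReal.ofReal M * μ (ball y b)) : a ≤ M * b := by
  rcases le_or_gt a 0 with ha | ha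
  · exact ha.trans (by positivity)
  rw [Measure.addHaar_ball_of_pos μ x ha, Measure.addHaar_ball_of_pos μ y hb, ← mul_assoc,
    ← ENNReal.ofReal_mul (by positivity),
    ENNReal.mul_le_mul_iff_left (measure_ball_pos μ _ one_pos).ne' measure_ball_lt_top.ne,
    ENNReal.ofReal_le_ofReal_iff (by positivity)] at h
  refine (pow_le_pow_iff_left₀ ha.le (by positivity) hE).1 (h.trans ?_)
  rw [mul_pow]
  exact mul_le_mul_of_nonneg_right (le_self_pow₀ hM hE) (by positivity)

end HaarBalls

section Counting

variable {E ι : Type*} [NormedAddCommGroup E] [NormedSpace ℝ E] [FiniteDimensional ℝ E]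
  {Q : ι → Set E} {c c' : ι → E} {r : ι → ℝ} {K L ρ R : ℝ} {n₀ : ℕ}

theorem card_le_of_subset_thickeningNeighbors (hK : 0 < K) (hL : 0 < L) (hρ : 0 < ρ)
    (hR : 0 ≤ R) (hρr : ∀ i, ρ ≤ r i) (hin : ∀ i, ball (c i) (r i) ⊆ Q i)
    (hout : ∀ i, Q i ⊆ ball (c' i) (K * r i))
    (hover : ∀ i (s : Finset ι), (∀ j ∈ s, (Q i ∩ Q j).Nonempty) → #s ≤ n₀)
    (hcomp : ∀ i, ∀ j ∈ thickeningNeighbors Q R i, r j ≤ L * r i)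
    {i : ι} {T : Finset ι} (hT : ↑T ⊆ thickeningNeighbors Q R i) :
    (#T : ℝ) ≤ n₀ * (L * (K + 2 * K * L + R / ρ)) ^ finrank ℝ E := by
  borelize E
  set μ : Measure E := Measure.addHaar
  set A := K + 2 * K * L + R / ρ
  set m := μ (ball 0 (r i / L))
  have hri : 0 < r i := hρ.trans_le (hρr i)
  have hsub : ∀ j ∈ T, ball (c j) (r j) ⊆ ball (c' i) (A * r i) := by
    intro j hj
    have hrj := hcomp i j (hT hj)
    have hRr : R ≤ R / ρ * r i := by
      rw [div_mul_eq_mul_div, le_div_iff₀ hρ]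
      exact mul_le_mul_of_nonneg_left (hρr i) hR
    refine (hin j).trans <| (subset_ball_of_mem_thickeningNeighbors (hout i) (hout j)
      (hT hj)).trans (ball_subset_ball ?_)
    nlinarith
  have hlow : ∀ j ∈ T, m ≤ μ (ball (c j) (r j)) := by
    intro j hj
    rw [Measure.addHaar_ball_center]
    refine measure_mono (ball_subset_ball ?_)
    rw [div_le_iff₀' hL]
    exact hcomp j i (mem_thickeningNeighbors_comm.1 (hT hj))
  have hmult : ∀ x, ∀ s ⊆ T, (∀ j ∈ s, x ∈ ball (c j) (r j)) → #s ≤ n₀ := by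
    intro x s _ hs
    obtain rfl | ⟨j₀, hj₀⟩ := s.eq_empty_or_nonempty
    · exact Nat.zero_le _
    · exact hover j₀ s fun j hj ↦ ⟨x, hin j₀ (hs j₀ hj₀), hin j (hs j hj)⟩
  have hbig : μ (ball (c' i) (A * r i)) = ENNReal.ofReal ((L * A) ^ finrank ℝ E) * m := by
    rw [← Measure.addHaar_ball_mul_of_pos μ _ (by positivity)]
    congr 2
    field_simp
  have hcount : (#T : ℝ≥0∞) * m ≤ n₀ * ENNReal.ofReal ((L * A) ^ finrank ℝ E) * m :=
    calc (#T : ℝ≥0∞) * m = ∑ _j ∈ T, m := by rw [sum_const, nsmul_eq_mul]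
      _ ≤ ∑ j ∈ T, μ (ball (c j) (r j)) := sum_le_sum hlow
      _ ≤ n₀ * μ (ball (c' i) (A * r i)) :=
        sum_measure_le_mul_of_multiplicity_le μ (fun _ _ ↦ measurableSet_ball) measurableSet_ball
          hsub hmult
      _ = n₀ * ENNReal.ofReal ((L * A) ^ finrank ℝ E) * m := by rw [hbig, mul_assoc]
  rw [ENNReal.mul_le_mul_iff_left (measure_ball_pos μ _ (by positivity)).ne'
    measure_ball_lt_top.ne, ← ENNReal.ofReal_natCast, ← ENNReal.ofReal_natCast n₀,
    ← ENNReal.ofReal_mul (by positivity), ENNReal.ofReal_le_ofReal_iff (by positivity)] at hcount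
  exact hcount

end Counting

namespace IsAlphaCovering

variable {n : ℕ} {α : ℝ} {ι : Type} {Q : ι → Set (Eu n)}

lemma nonempty (hQ : IsAlphaCovering α Q) (i : ι) : (Q i).Nonempty := by
  obtain ⟨K, -, hround⟩ := hQ.2.2.2
  obtain ⟨c, r, -, -, hr, hin, -⟩ := hround i
  exact ⟨c, hin (mem_ball_self hr)⟩

lemma exists_pos_le_volume (hQ : IsAlphaCovering α Q) (hα : 0 ≤ α) :
    ∃ κ > 0, ∀ i, ENNReal.ofReal κ ≤ volume (Q i) := by
  obtain ⟨C, hC, hCQ⟩ := hQ.2.2.1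
  refine ⟨C⁻¹, by positivity, fun i ↦ ?_⟩
  obtain ⟨ξ, hξ⟩ := hQ.nonempty i
  refine (ENNReal.ofReal_le_ofReal ?_).trans (hCQ i ξ hξ).1
  exact le_mul_of_one_le_right (by positivity) (Real.one_le_rpow (one_le_jb ξ) (by positivity))

lemma exists_volume_le_mul (hQ : IsAlphaCovering α Q) (hα : 0 ≤ α) (R : ℝ) :
    ∃ M ≥ 1, ∀ i, ∀ j ∈ thickeningNeighbors Q R i,
      volume (Q j) ≤ ENNReal.ofReal M * volume (Q i) := by
  obtain ⟨C, hC, hCQ⟩ := hQ.2.2.1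
  set s := α * n
  refine ⟨max (C ^ 2 * (1 + R) ^ s) 1, le_max_right _ _, fun i j hij ↦ ?_⟩
  obtain ⟨ξ, hξ, η, hη, hξη⟩ := mem_thickeningNeighbors_iff.1 hij
  have hR : 0 ≤ R := dist_nonneg.trans hξη.le
  have hjb : jb ξ ^ s ≤ (1 + R) ^ s * jb η ^ s := by
    rw [← Real.mul_rpow (by positivity) (by positivity [one_le_jb η])]
    exact Real.rpow_le_rpow (by positivity [one_le_jb ξ]) (jb_le_one_add_mul_jb hξη.le)
      (by positivity)
  have hη' : 0 ≤ C⁻¹ * jb η ^ s := by positivity [one_le_jb η]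
  calc volume (Q j) ≤ ENNReal.ofReal (C * jb ξ ^ s) := (hCQ j ξ hξ).2
    _ ≤ ENNReal.ofReal (max (C ^ 2 * (1 + R) ^ s) 1 * (C⁻¹ * jb η ^ s)) := by
      refine ENNReal.ofReal_le_ofReal ?_
      calc C * jb ξ ^ s ≤ C * ((1 + R) ^ s * jb η ^ s) := by gcongr
        _ = C ^ 2 * (1 + R) ^ s * (C⁻¹ * jb η ^ s) := by field_simp
        _ ≤ _ := by gcongr; exact le_max_left _ _
    _ ≤ ENNReal.ofReal (max (C ^ 2 * (1 + R) ^ s) 1) * volume (Q i) := by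
      rw [ENNReal.ofReal_mul (by positivity)]
      gcongr
      exact (hCQ i η hη).1

theorem exists_comparable_radii (hQ : IsAlphaCovering α Q) (hα : 0 ≤ α) (hn : n ≠ 0) (R : ℝ) :
    ∃ (c c' : ι → Eu n) (r : ι → ℝ) (K L ρ : ℝ), 0 < K ∧ 0 < L ∧ 0 < ρ ∧ ∀ i, ρ ≤ r i ∧
      ball (c i) (r i) ⊆ Q i ∧ Q i ⊆ ball (c' i) (K * r i) ∧
      ∀ j ∈ thickeningNeighbors Q R i, r j ≤ L * r i := by
  obtain ⟨K, hK, hround⟩ := hQ.2.2.2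
  choose c r c' R' hr hin hout hRK using hround
  have hout' i : Q i ⊆ ball (c' i) (K * r i) := (hout i).trans (ball_subset_ball (hRK i))
  have hd : finrank ℝ (Eu n) ≠ 0 := by simpa using hn
  obtain ⟨κ, hκ, hκQ⟩ := hQ.exists_pos_le_volume hα
  obtain ⟨ρ, hρ, hρball⟩ := exists_pos_le_of_le_measure_ball volume hd hκ
  obtain ⟨M, hM, hMQ⟩ := hQ.exists_volume_le_mul hα R
  refine ⟨c, c', r, K, M * K, ρ / K, by positivity, by positivity, by positivity,
    fun i ↦ ⟨?_, hin i, hout' i, fun j hij ↦ ?_⟩⟩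
  · rw [div_le_iff₀' (by positivity)]
    exact hρball _ _ ((hκQ i).trans (measure_mono (hout' i)))
  · rw [mul_assoc]
    refine le_mul_of_measure_ball_le volume hd hM (x := c j) (y := c' i) (by positivity [hr i]) ?_
    exact (measure_mono (hin j)).trans <| (hMQ i j hij).trans (by gcongr; exact hout' i)

end IsAlphaCovering

theorem stmt4_general (n : ℕ) (α : ℝ) (hα0 : 0 ≤ α)
    (ι : Type) (Q : ι → Set (Eu n))
    (hQ : IsAlphaCovering α Q) (R : ℝ) (hR : 0 < R) :
    ∃ n₀' : ℕ, ∀ i, {j | ((Q i + ball (0 : Eu n) R) ∩ Q j).Nonempty}.Finite ∧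
      Nat.card {j | ((Q i + ball (0 : Eu n) R) ∩ Q j).Nonempty} ≤ n₀' := by
  obtain ⟨n₀, hn₀⟩ := hQ.2.1
  simp_rw [add_ball_zero]
  rcases eq_or_ne n 0 with rfl | hn
  · refine ⟨n₀, fun i ↦ ?_⟩
    have hsub := thickeningNeighbors_subset_of_subsingleton (R := R) (hQ.nonempty i)
    exact ⟨(hn₀ i).1.subset hsub, (Nat.card_mono (hn₀ i).1 hsub).trans (hn₀ i).2⟩
  obtain ⟨c, c', r, K, L, ρ, hK, hL, hρ, h⟩ := hQ.exists_comparable_radii hα0 hn R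
  choose hρr hin hout hcomp using h
  have hover i (s : Finset ι) (hs : ∀ j ∈ s, (Q i ∩ Q j).Nonempty) : #s ≤ n₀ := by
    rw [← Set.ncard_coe_finset, ← Nat.card_coe_set_eq]
    exact (Nat.card_mono (hn₀ i).1 hs).trans (hn₀ i).2
  exact ⟨_, fun i ↦ Set.finite_and_natCard_le_of_forall_finset_card_le fun T hT ↦ Nat.le_floor <|
    card_le_of_subset_thickeningNeighbors hK hL hρ hR.le hρr hin hout hover hcomp hT⟩

theorem stmt4 (n : ℕ) (α : ℝ) (hα0 : 0 ≤ α) (hα1 : α ≤ 1)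
    (ι : Type) [Countable ι] (Q : ι → Set (Eu n))
    (hQ : IsAlphaCovering α Q) (R : ℝ) (hR : 0 < R) :
    ∃ n₀' : ℕ, ∀ i, {j | ((Q i + ball (0 : Eu n) R) ∩ Q j).Nonempty}.Finite ∧
      Nat.card {j | ((Q i + ball (0 : Eu n) R) ∩ Q j).Nonempty} ≤ n₀' :=
  stmt4_general n α hα0 ι Q hQ R hR
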